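/- Let Φ = (G, φ) be any r-regular T-gain graph on n vertices with r > 0. Then E(Φ) ≥ n, with equality if and only if every connected component of Φ is switching equivalent to (K_{r,r}, 1). -/

import Mathlib

open Matrix BigOperators
open scoped Classical ComplexOrder

/-- A complex unit gain graph (`𝕋`-gain graph) on a finite vertex type `V`. -/
structure TGainGraph (V : Type*) [Fintype V] [DecidableEq V] where
  G : SimpleGraph V
  A : Matrix V V ℂ
  herm : A.IsHermitian
  unitGain : ∀ i j, G.Adj i j → ‖A i j‖ = 1
  zeroGain : ∀ i j, ¬ G.Adj i j → A i j = 0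

namespace TGainGraph

variable {V : Type*} [Fintype V] [DecidableEq V]

/-- The energy of a `𝕋`-gain graph: sum of absolute values of eigenvalues of `A(Φ)`. -/
noncomputable def energy (Φ : TGainGraph V) : ℝ :=
  ∑ i, |Φ.herm.eigenvalues i|

/-- `|A(Φ)| = (A(Φ) A(Φ)ᴴ)^{1/2}`. -/
noncomputable def absMatrix (Φ : TGainGraph V) : Matrix V V ℂ :=
  let hA := (Matrix.posSemidef_self_mul_conjTranspose Φ.A).isHermitian
  (hA.eigenvectorUnitary : Matrix V V ℂ) *
    diagonal ((↑) ∘ (√·) ∘ hA.eigenvalues) * (star hA.eigenvectorUnitary : Matrix V V ℂ)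

/-- Energy of a vertex: the `(i,i)` entry of `|A(Φ)|`. -/
noncomputable def vertexEnergy (Φ : TGainGraph V) (i : V) : ℝ :=
  (Φ.absMatrix i i).re

/-- Degree of a vertex in the underlying graph. -/
noncomputable def deg (Φ : TGainGraph V) (i : V) : ℕ := Φ.G.degree i

/-- Maximum vertex degree of the underlying graph. -/
noncomputable def maxDeg (Φ : TGainGraph V) : ℕ := Φ.G.maxDegree

/-- Spectral radius of `A(Φ)`. -/
noncomputable def specRadius (Φ : TGainGraph V) : ℝ :=
  ⨆ i, |Φ.herm.eigenvalues i|

/-- Switching equivalence of two gain graphs on the same vertex set: same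
underlying graph, and adjacency matrices conjugate by a diagonal unitary. -/
def SwitchEquiv (Φ₁ Φ₂ : TGainGraph V) : Prop :=
  Φ₁.G = Φ₂.G ∧ ∃ U : Matrix V V ℂ, U.IsDiag ∧ U ∈ Matrix.unitaryGroup V ℂ ∧
    Φ₁.A = U * Φ₂.A * Uᴴ

/-- `Φ` switches to the all-ones gain on its underlying graph,
i.e. `Φ ∼ (G, 1)` (equivalently, `Φ` is balanced). -/
def SwitchesToOne (Φ : TGainGraph V) : Prop :=
  ∃ U : Matrix V V ℂ, U.IsDiag ∧ U ∈ Matrix.unitaryGroup V ℂ ∧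
    Φ.A = U * (Φ.G.adjMatrix ℂ) * Uᴴ

/-- `Φ ∼ (K_{a,b}, 1)`: the underlying graph is (isomorphic to) the complete
bipartite graph `K_{a,b}` via some bijection `e`, and the gains switch to `1`. -/
def SwitchEquivToCompleteBipartite (Φ : TGainGraph V) (a b : ℕ) : Prop :=
  (∃ e : V ≃ (Fin a ⊕ Fin b), ∀ i j, Φ.G.Adj i j ↔
      (completeBipartiteGraph (Fin a) (Fin b)).Adj (e i) (e j)) ∧
  SwitchesToOne Φ

/-- The gain of a walk: the product of the gains of its edges in order. -/
noncomputable def walkGain (Φ : TGainGraph V) {u v : V} (w : Φ.G.Walk u v) : ℂ :=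
  (w.darts.map (fun d => Φ.A d.fst d.snd)).prod

/-- A gain graph is balanced if every cycle has gain `1`. -/
def Balanced (Φ : TGainGraph V) : Prop :=
  ∀ (u : V) (w : Φ.G.Walk u u), w.IsCycle → Φ.walkGain w = 1

/-- The restriction of a gain graph to a set of vertices. -/
noncomputable def restrict (Φ : TGainGraph V) (s : Set V) : TGainGraph s where
  G := Φ.G.induce s
  A := Φ.A.submatrix (Subtype.val) (Subtype.val)
  herm := Φ.herm.submatrix _
  unitGain := fun i j h => Φ.unitGain i j h
  zeroGain := fun i j h => Φ.zeroGain i j h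

/-- The vertex set of the connected component `c`. -/
def componentSet (Φ : TGainGraph V) (c : Φ.G.ConnectedComponent) : Set V :=
  {v | Φ.G.connectedComponentMk v = c}

/-- Every connected component of `Φ` is either an isolated vertex or a balanced
complete bipartite gain graph `(K_{k,k},1)` with a perfect matching. -/
def ComponentsBalancedCompleteBipartitePM (Φ : TGainGraph V) : Prop :=
  ∀ c : Φ.G.ConnectedComponent,
    (∀ v ∈ Φ.componentSet c, ∀ w, ¬ Φ.G.Adj v w) ∨
    ∃ k : ℕ, 0 < k ∧
      (Φ.restrict (Φ.componentSet c)).SwitchEquivToCompleteBipartite k k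

/-- The matching number of a graph. -/
noncomputable def matchingNumber (G : SimpleGraph V) : ℕ :=
  sSup {k | ∃ M : G.Subgraph, M.IsMatching ∧ M.edgeSet.ncard = k}

/-- The vertex cover number of a graph. -/
noncomputable def coverNumber (G : SimpleGraph V) : ℕ :=
  sInf {k | ∃ s : Finset V, s.card = k ∧ ∀ i j, G.Adj i j → i ∈ s ∨ j ∈ s}

/-- The number of odd cycles of a graph (counted by their edge sets). -/
noncomputable def oddCycleCount (G : SimpleGraph V) : ℕ :=
  Set.ncard {s : Set (Sym2 V) | ∃ (u : V) (w : G.Walk u u),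
    w.IsCycle ∧ Odd w.length ∧ s = {e | e ∈ w.edges}}

end TGainGraph

/-!
Every row of `A(Φ)` has exactly `r` nonzero entries, all of modulus one, so `tr A² = n r` and,
by Gershgorin, every eigenvalue has `|λ| ≤ r`; hence `n r = ∑ λ² ≤ r ∑ |λ| = r E(Φ)`, with
equality iff every eigenvalue lies in `{0, ±r}`, i.e. iff `A³ = r² A`.

For an edge `ij`, the entry `(A³)ᵢⱼ` is a sum over the `r²` walks `i k l j` of gains of modulus at
most one, and it equals `r² Aᵢⱼ` only if every such walk has gain exactly `Aᵢⱼ`. So `A³ = r² A`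
says that every path of length three closes into a `4`-cycle of gain one. In an `r`-regular graph
this forces each component to be `K_{r,r}`, whose sides are the neighbourhoods of the two ends of
any edge, and the gains of walks to a fixed vertex switch `Φ` to the all-one gain.
-/

theorem abs_mul_sub_abs_eq_zero_iff {x c : ℝ} (hc : 0 ≤ c) :
    |x| * (c - |x|) = 0 ↔ x ^ 3 = c ^ 2 * x := by
  have hfactor : x ^ 3 - c ^ 2 * x = x * ((x - c) * (x + c)) := by ring
  rw [mul_eq_zero, abs_eq_zero, sub_eq_zero, eq_comm (a := c), abs_eq hc,
    ← sub_eq_zero (a := x ^ 3), hfactor, mul_eq_zero, mul_eq_zero, sub_eq_zero,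
    add_eq_zero_iff_eq_neg]

open scoped RealInnerProductSpace in
theorem eq_of_norm_le_of_sum_eq_card_nsmul {E ι : Type*} [NormedAddCommGroup E]
    [InnerProductSpace ℝ E] {s : Finset ι} {z : ι → E} {w : E} (hz : ∀ i ∈ s, ‖z i‖ ≤ ‖w‖)
    (hsum : ∑ i ∈ s, z i = s.card • w) : ∀ i ∈ s, z i = w := by
  have hle : ∀ i ∈ s, ⟪z i, w⟫ ≤ ‖w‖ ^ 2 := fun i hi => by
    nlinarith [real_inner_le_norm (z i) w, hz i hi, norm_nonneg w]
  have hinner : ∑ i ∈ s, ⟪z i, w⟫ = ∑ i ∈ s, ‖w‖ ^ 2 := by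
    rw [← sum_inner, hsum, ← Nat.cast_smul_eq_nsmul ℝ, real_inner_smul_left,
      real_inner_self_eq_norm_sq, Finset.sum_const, nsmul_eq_mul]
  intro i hi
  have hzw : ⟪z i, w⟫ = ‖w‖ ^ 2 := (Finset.sum_eq_sum_iff_of_le hle).mp hinner i hi
  have hdist : ‖z i - w‖ = 0 := by
    nlinarith [norm_sub_sq_real (z i) w, hz i hi, norm_nonneg (z i), norm_nonneg (z i - w)]
  exact sub_eq_zero.mp (norm_eq_zero.mp hdist)

theorem Complex.mul_star_self_eq_one_iff {z : ℂ} : z * star z = 1 ↔ ‖z‖ = 1 := by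
  rw [RCLike.star_def, Complex.mul_conj', ← Complex.ofReal_pow, Complex.ofReal_eq_one,
    pow_eq_one_iff_of_nonneg (norm_nonneg z) two_ne_zero]

namespace Matrix.IsHermitian

variable {n 𝕜 : Type*} [Fintype n] [DecidableEq n] [RCLike 𝕜] {A : Matrix n n 𝕜}

theorem trace_cfc (hA : A.IsHermitian) (f : ℝ → ℝ) :
    (cfc f A).trace = ∑ i, (f (hA.eigenvalues i) : 𝕜) := by
  rw [hA.cfc_eq, IsHermitian.cfc, Unitary.conjStarAlgAut_apply, trace_mul_cycle,
    Unitary.coe_star_mul_self, one_mul, trace_diagonal]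
  rfl

theorem re_trace_sq (hA : A.IsHermitian) :
    RCLike.re (A ^ 2).trace = ∑ i, hA.eigenvalues i ^ 2 := by
  rw [← cfc_pow_id (R := ℝ) A 2 hA.isSelfAdjoint, hA.trace_cfc, map_sum]
  simp only [RCLike.ofReal_re]

theorem pow_three_eq_smul_iff (hA : A.IsHermitian) (c : ℝ) :
    A ^ 3 = c • A ↔ ∀ i, hA.eigenvalues i ^ 3 = c * hA.eigenvalues i := by
  rw [← cfc_pow_id (R := ℝ) A 3 hA.isSelfAdjoint, ← cfc_const_mul_id c A hA.isSelfAdjoint,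
    cfc_eq_cfc_iff_eqOn, hA.spectrum_real_eq_range_eigenvalues, Set.eqOn_range]
  exact funext_iff

theorem hasEigenvalue_eigenvalues (hA : A.IsHermitian) (i : n) :
    Module.End.HasEigenvalue (toLin' A) (hA.eigenvalues i : 𝕜) := by
  apply Module.End.HasEigenvalue.of_mem_spectrum
  rw [Matrix.spectrum_toLin']
  exact spectrum.algebraMap_mem 𝕜 (hA.eigenvalues_mem_spectrum_real i)

end Matrix.IsHermitian

namespace SimpleGraph

theorem nonempty_iso_completeBipartiteGraph {W : Type*} [Fintype W] (G : SimpleGraph W)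
    (p : W → Prop) [DecidablePred p] {a b : ℕ} (ha : Fintype.card {x // p x} = a)
    (hb : Fintype.card {x // ¬ p x} = b) (hadj : ∀ x y, G.Adj x y ↔ (p x ↔ ¬ p y)) :
    Nonempty (G ≃g completeBipartiteGraph (Fin a) (Fin b)) := by
  refine ⟨⟨(Equiv.sumCompl p).symm.trans
    (Equiv.sumCongr (Fintype.equivFinOfCardEq ha) (Fintype.equivFinOfCardEq hb)), ?_⟩⟩
  intro x y
  rw [hadj]
  by_cases hx : p x <;> by_cases hy : p y <;>
    simp [Equiv.sumCompl_symm_apply_of_pos, Equiv.sumCompl_symm_apply_of_neg, hx, hy]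

variable {W : Type*} {G : SimpleGraph W}

theorem adj_iff_not_adj_of_reachable
    (h3 : ∀ ⦃a b c d⦄, G.Adj a b → G.Adj b c → G.Adj c d → G.Adj a d)
    {u v x : W} (hvu : G.Adj v u) (hx : G.Reachable v x) : G.Adj u x ↔ ¬ G.Adj v x := by
  have hcover : G.Adj u x ∨ G.Adj v x := by
    rw [reachable_iff_reflTransGen] at hx
    induction hx with
    | refl => exact Or.inl hvu.symm
    | tail _ hyz ih =>
      exact ih.elim (fun h => Or.inr (h3 hvu h hyz)) (fun h => Or.inl (h3 hvu.symm h hyz))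
  exact ⟨fun hux hvx => G.irrefl (h3 hvx hux.symm hvu.symm), hcover.resolve_right⟩

theorem adj_iff_of_reachable
    (h3 : ∀ ⦃a b c d⦄, G.Adj a b → G.Adj b c → G.Adj c d → G.Adj a d)
    {u v x y : W} (hvu : G.Adj v u) (hx : G.Reachable v x) (hy : G.Reachable v y) :
    G.Adj x y ↔ (G.Adj u x ↔ ¬ G.Adj u y) := by
  have hvx := (adj_iff_not_adj_of_reachable h3 hvu hx).not_left.mp
  have hvy := (adj_iff_not_adj_of_reachable h3 hvu hy).not_left.mp
  refine ⟨fun hxy => ⟨fun hux huy => G.irrefl (h3 hux hxy huy.symm),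
    fun huy => by_contra fun hux => huy (h3 hvu.symm (hvx hux) hxy)⟩, fun h => ?_⟩
  by_cases hux : G.Adj u x
  · exact h3 hux.symm hvu.symm (hvy (h.mp hux))
  · exact h3 (hvx hux).symm hvu (h.not_left.mp hux)

end SimpleGraph

namespace TGainGraph

variable {V : Type*} [Fintype V] [DecidableEq V] (Φ : TGainGraph V)

theorem norm_A_le_one (i j : V) : ‖Φ.A i j‖ ≤ 1 := by
  by_cases h : Φ.G.Adj i j
  · exact (Φ.unitGain i j h).le
  · simp [Φ.zeroGain i j h]

theorem adj_of_A_ne_zero {i j : V} (h : Φ.A i j ≠ 0) : Φ.G.Adj i j :=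
  not_not.mp (mt (Φ.zeroGain i j) h)

theorem A_ne_zero {i j : V} (h : Φ.G.Adj i j) : Φ.A i j ≠ 0 :=
  norm_ne_zero_iff.mp (by rw [Φ.unitGain i j h]; exact one_ne_zero)

theorem star_A (i j : V) : star (Φ.A i j) = Φ.A j i :=
  Φ.herm.apply j i

theorem sum_A_mul_eq_sum_neighborFinset (i : V) (f : V → ℂ) :
    ∑ k, Φ.A i k * f k = ∑ k ∈ Φ.G.neighborFinset i, Φ.A i k * f k := by
  rw [SimpleGraph.neighborFinset_eq_filter, Finset.sum_filter]
  refine Finset.sum_congr rfl fun k _ => ?_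
  split_ifs with h
  · rfl
  · rw [Φ.zeroGain i k h, zero_mul]

theorem sum_norm_A (i : V) : ∑ j, ‖Φ.A i j‖ = Φ.deg i := by
  have h (j : V) : ‖Φ.A i j‖ = if Φ.G.Adj i j then 1 else 0 := by
    split_ifs with hij
    · exact Φ.unitGain i j hij
    · simp [Φ.zeroGain i j hij]
  simp_rw [h, Finset.sum_boole, ← SimpleGraph.neighborFinset_eq_filter,
    SimpleGraph.card_neighborFinset_eq_degree]
  rfl

theorem sq_apply_self (i : V) : (Φ.A ^ 2) i i = Φ.deg i := by
  have hunit : ∀ j ∈ Φ.G.neighborFinset i, Φ.A i j * Φ.A j i = 1 := fun j hj => by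
    rw [← Φ.star_A i j, Complex.mul_star_self_eq_one_iff]
    exact Φ.unitGain i j ((Φ.G.mem_neighborFinset i j).mp hj)
  rw [sq, mul_apply, sum_A_mul_eq_sum_neighborFinset, Finset.sum_congr rfl hunit,
    Finset.sum_const, SimpleGraph.card_neighborFinset_eq_degree, nsmul_one]
  rfl

theorem pow_three_apply (i j : V) :
    (Φ.A ^ 3) i j = ∑ k ∈ Φ.G.neighborFinset i, ∑ l ∈ Φ.G.neighborFinset k,
      Φ.A i k * Φ.A k l * Φ.A l j := by
  rw [pow_three, mul_apply, sum_A_mul_eq_sum_neighborFinset]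
  refine Finset.sum_congr rfl fun k _ => ?_
  rw [mul_apply, sum_A_mul_eq_sum_neighborFinset, Finset.mul_sum]
  simp_rw [mul_assoc]

theorem switchesToOne_iff_exists_potential :
    Φ.SwitchesToOne ↔ ∃ w : V → ℂ, (∀ v, ‖w v‖ = 1) ∧
      ∀ i j, Φ.G.Adj i j → Φ.A i j = w i * star (w j) := by
  have conj_apply (d : V → ℂ) (i j : V) :
      (diagonal d * Φ.G.adjMatrix ℂ * (diagonal d)ᴴ) i j =
        if Φ.G.Adj i j then d i * star (d j) else 0 := by
    simp only [diagonal_conjTranspose, mul_diagonal, diagonal_mul, SimpleGraph.adjMatrix_apply,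
      Pi.star_apply]
    split_ifs <;> ring
  constructor
  · rintro ⟨U, hU, hUnit, hA⟩
    obtain ⟨d, rfl⟩ : ∃ d, U = diagonal d := ⟨U.diag, hU.diagonal_diag.symm⟩
    refine ⟨d, fun v => ?_, fun i j hij => by rw [hA, conj_apply, if_pos hij]⟩
    rw [mem_unitaryGroup_iff, star_eq_conjTranspose, diagonal_conjTranspose,
      diagonal_mul_diagonal, ← diagonal_one, diagonal_eq_diagonal_iff] at hUnit
    exact Complex.mul_star_self_eq_one_iff.mp (hUnit v)
  · rintro ⟨w, hw, hA⟩
    refine ⟨diagonal w, isDiag_diagonal w, ?_, ?_⟩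
    · rw [mem_unitaryGroup_iff, star_eq_conjTranspose, diagonal_conjTranspose,
        diagonal_mul_diagonal, ← diagonal_one]
      exact congrArg diagonal (funext fun v => Complex.mul_star_self_eq_one_iff.mpr (hw v))
    · ext i j
      rw [conj_apply]
      split_ifs with h
      · exact hA i j h
      · exact Φ.zeroGain i j h

/-- Equivalently: every walk of length three closes up into a closed walk of length four, and
every closed walk of length four has gain one. -/
def FourWalksBalanced : Prop :=
  ∀ i k l j, Φ.G.Adj i k → Φ.G.Adj k l → Φ.G.Adj i j → Φ.A i k * Φ.A k l * Φ.A l j = Φ.A i j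

variable {Φ} {r : ℕ}

theorem sum_eigenvalues_sq (hreg : ∀ v, Φ.deg v = r) :
    ∑ i, Φ.herm.eigenvalues i ^ 2 = (Fintype.card V : ℝ) * r := by
  rw [← Φ.herm.re_trace_sq]
  simp [trace, sq_apply_self, hreg]

theorem abs_eigenvalues_le (hreg : ∀ v, Φ.deg v = r) (i : V) :
    |Φ.herm.eigenvalues i| ≤ r := by
  obtain ⟨k, hk⟩ := eigenvalue_mem_ball (Φ.herm.hasEigenvalue_eigenvalues i)
  have hkk : Φ.A k k = 0 := Φ.zeroGain k k (Φ.G.irrefl)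
  rwa [Metric.mem_closedBall, hkk, dist_zero_right, RCLike.norm_ofReal,
    Finset.sum_erase _ (by rw [hkk, norm_zero]), sum_norm_A, hreg] at hk

theorem abs_eigenvalues_mul_sub_nonneg (hreg : ∀ v, Φ.deg v = r) (i : V) :
    0 ≤ |Φ.herm.eigenvalues i| * (r - |Φ.herm.eigenvalues i|) :=
  mul_nonneg (abs_nonneg _) (sub_nonneg.mpr (abs_eigenvalues_le hreg i))

theorem sum_abs_eigenvalues_mul_sub (hreg : ∀ v, Φ.deg v = r) :
    ∑ i, |Φ.herm.eigenvalues i| * (r - |Φ.herm.eigenvalues i|) =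
      r * (Φ.energy - Fintype.card V) := by
  simp_rw [mul_sub, Finset.sum_sub_distrib, abs_mul_abs_self, ← sq, sum_eigenvalues_sq hreg,
    ← Finset.sum_mul, energy]
  ring

theorem card_le_energy (hr : 0 < r) (hreg : ∀ v, Φ.deg v = r) :
    (Fintype.card V : ℝ) ≤ Φ.energy := by
  rw [← sub_nonneg, ← mul_nonneg_iff_of_pos_left (Nat.cast_pos.mpr hr : (0 : ℝ) < r),
    ← sum_abs_eigenvalues_mul_sub hreg]
  exact Finset.sum_nonneg fun i _ => abs_eigenvalues_mul_sub_nonneg hreg i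

theorem energy_eq_card_iff (hr : 0 < r) (hreg : ∀ v, Φ.deg v = r) :
    Φ.energy = Fintype.card V ↔ Φ.A ^ 3 = ((r : ℝ) ^ 2) • Φ.A := by
  rw [Φ.herm.pow_three_eq_smul_iff, ← sub_eq_zero,
    ← mul_eq_zero_iff_left (Nat.cast_pos.mpr hr : (0 : ℝ) < r).ne',
    ← sum_abs_eigenvalues_mul_sub hreg,
    Finset.sum_eq_zero_iff_of_nonneg fun i _ => abs_eigenvalues_mul_sub_nonneg hreg i]
  simp [abs_mul_sub_abs_eq_zero_iff (Nat.cast_nonneg r)]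

theorem FourWalksBalanced.adj (hΦ : Φ.FourWalksBalanced) {i k l j : V} (hik : Φ.G.Adj i k)
    (hkl : Φ.G.Adj k l) (hlj : Φ.G.Adj l j) : Φ.G.Adj i j := by
  refine Φ.adj_of_A_ne_zero fun h => Φ.A_ne_zero hlj ?_
  rw [← hΦ l k i j hkl.symm hik.symm hlj, h, mul_zero]

theorem pow_three_eq_smul_iff_fourWalksBalanced (hreg : ∀ v, Φ.deg v = r) :
    Φ.A ^ 3 = ((r : ℝ) ^ 2) • Φ.A ↔ Φ.FourWalksBalanced := by
  have hcard (v : V) : (Φ.G.neighborFinset v).card = r := hreg v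
  constructor
  · intro h i k l j hik hkl hij
    have hsum := congrFun (congrFun h i) j
    rw [pow_three_apply, Finset.sum_sigma'] at hsum
    refine eq_of_norm_le_of_sum_eq_card_nsmul (w := Φ.A i j)
      (s := (Φ.G.neighborFinset i).sigma fun k => Φ.G.neighborFinset k)
      (z := fun x : Σ _ : V, V => Φ.A i x.1 * Φ.A x.1 x.2 * Φ.A x.2 j) ?_ ?_ ⟨k, l⟩
      (Finset.mem_sigma.mpr ⟨(Φ.G.mem_neighborFinset i k).mpr hik,
        (Φ.G.mem_neighborFinset k l).mpr hkl⟩)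
    · intro x _
      rw [Φ.unitGain i j hij, norm_mul, norm_mul]
      exact mul_le_one₀ (mul_le_one₀ (Φ.norm_A_le_one _ _) (norm_nonneg _)
        (Φ.norm_A_le_one _ _)) (norm_nonneg _) (Φ.norm_A_le_one _ _)
    · rw [hsum, Finset.card_sigma, Finset.sum_const_nat fun k _ => hcard k, hcard,
        Matrix.smul_apply, Complex.real_smul, nsmul_eq_mul]
      push_cast
      ring
  · intro hΦ
    ext i j
    rw [pow_three_apply, Matrix.smul_apply, Complex.real_smul]
    by_cases hij : Φ.G.Adj i j
    · rw [Finset.sum_congr rfl fun k hk => Finset.sum_congr rfl fun l hl =>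
        hΦ i k l j ((Φ.G.mem_neighborFinset i k).mp hk) ((Φ.G.mem_neighborFinset k l).mp hl) hij]
      simp only [Finset.sum_const, hcard, nsmul_eq_mul]
      push_cast
      ring
    · rw [Φ.zeroGain i j hij, mul_zero]
      refine Finset.sum_eq_zero fun k hk => Finset.sum_eq_zero fun l hl => ?_
      rw [Φ.zeroGain l j fun hlj => hij (hΦ.adj ((Φ.G.mem_neighborFinset i k).mp hk)
        ((Φ.G.mem_neighborFinset k l).mp hl) hlj), mul_zero]

theorem SwitchEquivToCompleteBipartite.fourWalksBalanced {a b : ℕ}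
    (h : Φ.SwitchEquivToCompleteBipartite a b) : Φ.FourWalksBalanced := by
  obtain ⟨⟨e, he⟩, hs⟩ := h
  obtain ⟨w, hw, hA⟩ := (switchesToOne_iff_exists_potential Φ).mp hs
  intro i k l j hik hkl hij
  have hlj : Φ.G.Adj l j := by
    rw [he] at hik hkl hij ⊢
    revert hik hkl hij
    cases e i <;> cases e k <;> cases e l <;> cases e j <;> simp
  have hunit (v : V) : w v * star (w v) = 1 := Complex.mul_star_self_eq_one_iff.mpr (hw v)
  rw [hA i k hik, hA k l hkl, hA l j hlj, hA i j hij]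
  linear_combination (w i * star (w j) * (w l * star (w l))) * hunit k +
    (w i * star (w j)) * hunit l

theorem fourWalksBalanced_of_forall_restrict
    (h : ∀ c, (Φ.restrict (Φ.componentSet c)).FourWalksBalanced) : Φ.FourWalksBalanced := by
  intro i k l j hik hkl hij
  have hmem {x : V} (hx : Φ.G.Reachable i x) :
      x ∈ Φ.componentSet (Φ.G.connectedComponentMk i) :=
    SimpleGraph.ConnectedComponent.sound hx.symm
  exact h _ ⟨i, hmem (.refl i)⟩ ⟨k, hmem hik.reachable⟩
    ⟨l, hmem (hik.reachable.trans hkl.reachable)⟩ ⟨j, hmem hij.reachable⟩ hik hkl hij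

theorem FourWalksBalanced.switchesToOne_restrict (hΦ : Φ.FourWalksBalanced) {u₀ v₀ : V}
    (hvu : Φ.G.Adj v₀ u₀) :
    (Φ.restrict (Φ.componentSet (Φ.G.connectedComponentMk v₀))).SwitchesToOne := by
  have hreach (x : Φ.componentSet (Φ.G.connectedComponentMk v₀)) : Φ.G.Reachable v₀ x :=
    (SimpleGraph.ConnectedComponent.exact x.2).symm
  have hside (x : Φ.componentSet (Φ.G.connectedComponentMk v₀)) :=
    (SimpleGraph.adj_iff_not_adj_of_reachable (fun _ _ _ _ => hΦ.adj) hvu (hreach x)).not_left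
  rw [switchesToOne_iff_exists_potential]
  -- `w x` is the gain of a walk of length one or two from `x` to `u₀`
  refine ⟨fun x => if Φ.G.Adj u₀ x then Φ.A x u₀ else Φ.A x v₀ * Φ.A v₀ u₀, fun x => ?_,
    fun x y hxy => ?_⟩
  · dsimp only
    split_ifs with hux
    · exact Φ.unitGain _ _ hux.symm
    · rw [norm_mul, Φ.unitGain _ _ ((hside x).mp hux).symm, Φ.unitGain _ _ hvu, one_mul]
  · have hxy' := (SimpleGraph.adj_iff_of_reachable (fun _ _ _ _ => hΦ.adj) hvu
      (hreach x) (hreach y)).mp hxy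
    change Φ.A x y = _
    dsimp only
    by_cases hux : Φ.G.Adj u₀ x
    · rw [if_pos hux, if_neg (hxy'.mp hux), star_mul', star_A, star_A,
        ← hΦ x u₀ v₀ y hux.symm hvu.symm hxy]
      ring
    · rw [if_neg hux, if_pos (hxy'.not_left.mp hux), star_A,
        ← hΦ x v₀ u₀ y ((hside x).mp hux).symm hvu hxy]

theorem FourWalksBalanced.switchEquivToCompleteBipartite (hΦ : Φ.FourWalksBalanced)
    (hr : 0 < r) (hreg : ∀ v, Φ.deg v = r) (c : Φ.G.ConnectedComponent) :
    (Φ.restrict (Φ.componentSet c)).SwitchEquivToCompleteBipartite r r := by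
  obtain ⟨v₀, rfl⟩ := c.exists_rep
  obtain ⟨u₀, hvu⟩ := (Φ.G.degree_pos_iff_exists_adj v₀).mp (hr.trans_eq (hreg v₀).symm)
  refine ⟨?_, hΦ.switchesToOne_restrict hvu⟩
  set S := Φ.componentSet (Φ.G.connectedComponentMk v₀)
  have h3 : ∀ ⦃a b c d⦄, Φ.G.Adj a b → Φ.G.Adj b c → Φ.G.Adj c d → Φ.G.Adj a d :=
    fun _ _ _ _ => hΦ.adj
  have hmem {x : V} (hx : Φ.G.Reachable v₀ x) : x ∈ S :=
    SimpleGraph.ConnectedComponent.sound hx.symm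
  have hreach (x : S) : Φ.G.Reachable v₀ x := (SimpleGraph.ConnectedComponent.exact x.2).symm
  have hside (x : S) := SimpleGraph.adj_iff_not_adj_of_reachable h3 hvu (hreach x)
  have hcardL : Fintype.card {x : S // (x : V) ∈ Φ.G.neighborSet u₀} = r := by
    rw [Fintype.card_congr (Equiv.subtypeSubtypeEquivSubtype (q := (· ∈ Φ.G.neighborSet u₀))
      fun hx => hmem (hvu.reachable.trans (SimpleGraph.Adj.reachable hx))),
      Φ.G.card_neighborSet_eq_degree]
    exact hreg u₀
  have hcardR : Fintype.card {x : S // (x : V) ∉ Φ.G.neighborSet u₀} = r := by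
    rw [Fintype.card_congr ((Equiv.subtypeSubtypeEquivSubtypeInter (· ∈ S)
      (· ∉ Φ.G.neighborSet u₀)).trans (Equiv.subtypeEquivRight (q := (· ∈ Φ.G.neighborSet v₀))
        fun x => ⟨fun hx => (hside ⟨x, hx.1⟩).not_left.mp hx.2, fun hx =>
          ⟨hmem hx.reachable, fun hux => (hside ⟨x, hmem hx.reachable⟩).mp hux hx⟩⟩)),
      Φ.G.card_neighborSet_eq_degree]
    exact hreg v₀
  obtain ⟨e⟩ := (Φ.restrict S).G.nonempty_iso_completeBipartiteGraph _ hcardL hcardR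
    fun x y => SimpleGraph.adj_iff_of_reachable h3 hvu (hreach x) (hreach y)
  exact ⟨e.toEquiv, fun x y => e.map_adj_iff.symm⟩

end TGainGraph

open TGainGraph in
/-- For an `r`-regular gain graph on `n` vertices with `r > 0`, `E(Φ) ≥ n`, with
equality iff every connected component is switching equivalent to `(K_{r,r},1)`. -/
theorem card_le_energy_of_regular {V : Type*} [Fintype V] [DecidableEq V]
    (Φ : TGainGraph V) (r : ℕ) (hr : 0 < r) (hreg : ∀ v, Φ.deg v = r) :
    (Fintype.card V : ℝ) ≤ Φ.energy ∧
    (Φ.energy = (Fintype.card V : ℝ) ↔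
      ∀ c : Φ.G.ConnectedComponent,
        (Φ.restrict (Φ.componentSet c)).SwitchEquivToCompleteBipartite r r) := by
  refine ⟨card_le_energy hr hreg, ?_⟩
  rw [energy_eq_card_iff hr hreg, pow_three_eq_smul_iff_fourWalksBalanced hreg]
  exact ⟨fun hΦ c => hΦ.switchEquivToCompleteBipartite hr hreg c,
    fun h => fourWalksBalanced_of_forall_restrict fun c => (h c).fourWalksBalanced⟩
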